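/- arXiv:1001.4611 — 3 statements merged into one kernel-verified Lean document; each statement's English description precedes it below -/
import Mathlib

section
/- For all x > 0, [ψ'(x)]² + ψ''(x) > p(x) / (900 x⁴ (x+1)¹⁰), where p(x) = 75x¹⁰ + 900x⁹ + 4840x⁸ + 15370x⁷ + 31865x⁶ + 45050x⁵ + 44101x⁴ + 29700x³ + 13290x² + 3600x + 450. -/
noncomputable def trigamma (x : ℝ) : ℝ :=
  iteratedDeriv 2 (fun y => Real.log (Real.Gamma y)) x

noncomputable def tetragamma (x : ℝ) : ℝ :=
  iteratedDeriv 3 (fun y => Real.log (Real.Gamma y)) x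

noncomputable def p (x : ℝ) : ℝ :=
  75*x^10 + 900*x^9 + 4840*x^8 + 15370*x^7 + 31865*x^6 + 45050*x^5
    + 44101*x^4 + 29700*x^3 + 13290*x^2 + 3600*x + 450

/-!
Termwise differentiation of the Weierstrass series of `log Γ` gives `ψ'(x) = ∑ 1/(x+n)²` and
`ψ''(x) = -∑ 2/(x+n)³` for `x > 0`. If `φ` tends to `0` at infinity and `φ t - φ (t+1) ≤ f t`,
telescoping gives `φ x ≤ ∑ f (x+n)`. Truncations of the asymptotic expansions of `ψ'` and `ψ''`
satisfy this, the defect being an explicit rational function with positive coefficients. These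
bounds are applied at `x + 1`, where the one for `ψ'` is nonnegative and may be squared, and
`ψ'(x) = 1/x² + ψ'(x+1)`, `ψ''(x) = -2/x³ + ψ''(x+1)` reduce the claim to the positivity of a
single rational function.
-/

open Real Filter Topology Set

theorem summable_inv_add_pow {x : ℝ} (hx : 0 < x) {k : ℕ} (hk : 2 ≤ k) :
    Summable fun n : ℕ => ((x + n) ^ k)⁻¹ := by
  refine ((summable_one_div_nat_add_rpow x k).mpr (by exact_mod_cast hk)).congr fun n => ?_
  rw [abs_of_pos (by positivity), rpow_natCast, one_div, add_comm]

theorem tsum_nat_add_eq_add_tsum {f : ℝ → ℝ} {x : ℝ} (hf : Summable fun n : ℕ => f (x + n)) :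
    ∑' n : ℕ, f (x + n) = f x + ∑' n : ℕ, f (x + 1 + n) := by
  rw [hf.tsum_eq_zero_add]
  push_cast
  simp only [add_zero, add_right_comm x, add_assoc]

theorem le_tsum_of_sub_le {f φ : ℝ → ℝ} {x : ℝ} (hφ : Tendsto φ atTop (𝓝 0))
    (hf : Summable fun n : ℕ => f (x + n)) (hstep : ∀ t, x ≤ t → φ t - φ (t + 1) ≤ f t) :
    φ x ≤ ∑' n : ℕ, f (x + n) := by
  have hlim : Tendsto (fun N : ℕ => φ x - φ (x + N)) atTop (𝓝 (φ x)) := by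
    simpa using tendsto_const_nhds.sub
      (hφ.comp (tendsto_atTop_add_const_left _ x tendsto_natCast_atTop_atTop))
  refine le_of_tendsto_of_tendsto' hlim hf.hasSum.tendsto_sum_nat fun N => ?_
  calc φ x - φ (x + N) = ∑ n ∈ Finset.range N, (φ (x + n) - φ (x + n + 1)) := by
        simpa [add_assoc] using (Finset.sum_range_sub' (fun n : ℕ => φ (x + n)) N).symm
    _ ≤ ∑ n ∈ Finset.range N, f (x + n) :=
        Finset.sum_le_sum fun n _ => hstep _ (by simp)

theorem log_add_nat_succ_sub_le {x : ℝ} (hx : 0 ≤ x) (n : ℕ) :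
    log (x + n + 1) - log (n + 1) ≤ x / (n + 1) := by
  rw [← log_div (by positivity) (by positivity)]
  refine (log_le_sub_one_of_pos (by positivity)).trans_eq ?_
  field_simp
  ring

theorem sum_range_eq_logGammaSeq (x : ℝ) (N : ℕ) :
    ∑ n ∈ Finset.range N, (x / (n + 1) - (log (x + n + 1) - log (n + 1)))
      = x * (harmonic N - log N) + BohrMollerup.logGammaSeq x N + log x := by
  induction N with
  | zero => simp [BohrMollerup.logGammaSeq]
  | succ N ih =>
    rw [Finset.sum_range_succ, ih]
    simp only [BohrMollerup.logGammaSeq, harmonic_succ, Finset.sum_range_succ (n := N + 1)]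
    push_cast
    rw [Nat.factorial_succ, Nat.cast_mul, log_mul (by positivity) (by positivity)]
    push_cast
    rw [← add_assoc x]
    ring

theorem hasSum_log_Gamma {x : ℝ} (hx : 0 < x) :
    HasSum (fun n : ℕ => x / (n + 1) - (log (x + n + 1) - log (n + 1)))
      (log (Gamma x) + log x + eulerMascheroniConstant * x) := by
  rw [hasSum_iff_tendsto_nat_of_nonneg fun n => sub_nonneg.mpr (log_add_nat_succ_sub_le hx.le n)]
  simp only [sum_range_eq_logGammaSeq]
  convert ((tendsto_harmonic_sub_log.const_mul x).add (BohrMollerup.tendsto_log_gamma hx)).add_const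
    (log x) using 2
  ring

theorem hasDerivAt_inv_pow_add {a y : ℝ} (h : y + a ≠ 0) (k : ℕ) :
    HasDerivAt (fun z : ℝ => ((z + a) ^ k)⁻¹) (-(k * ((y + a) ^ (k + 1))⁻¹)) y := by
  refine ((((hasDerivAt_id' y).add_const a).fun_pow k).fun_inv (pow_ne_zero k h)).congr_deriv ?_
  rcases k with _ | k
  · simp
  · rw [Nat.add_sub_cancel]
    field_simp
    ring

theorem hasDerivAt_tsum_inv_add_pow {x : ℝ} (hx : 0 < x) {k : ℕ} (hk : 2 ≤ k) :
    HasDerivAt (fun y : ℝ => ∑' n : ℕ, ((y + n) ^ k)⁻¹)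
      (∑' n : ℕ, -(k * ((x + n) ^ (k + 1))⁻¹)) x := by
  have hx2 : x / 2 < x := half_lt_self hx
  refine hasDerivAt_tsum_of_isPreconnected
    ((summable_inv_add_pow (half_pos hx) (hk.trans k.le_succ)).mul_left (k : ℝ)) isOpen_Ioi
    isPreconnected_Ioi (fun n y hy => hasDerivAt_inv_pow_add (ne_of_gt ?_) k)
    (fun n y (hy : x / 2 < y) => ?_) hx2 (summable_inv_add_pow hx hk) hx2
  · have : 0 < y := (half_pos hx).trans hy
    positivity
  have : 0 < x / 2 + n := by positivity
  rw [norm_neg, norm_mul, Real.norm_natCast, norm_inv, norm_pow, Real.norm_of_nonneg (by linarith)]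
  gcongr

theorem abs_inv_sub_inv_add_le {y c : ℝ} (hy : 0 ≤ y) (hyc : y ≤ c) (n : ℕ) :
    |(n + 1 : ℝ)⁻¹ - (y + n + 1)⁻¹| ≤ c / (n + 1) ^ 2 := by
  have hn : (0 : ℝ) < n + 1 := by positivity
  have hdiff : (n + 1 : ℝ)⁻¹ - (y + n + 1)⁻¹ = y / ((n + 1) * (y + n + 1)) := by
    field_simp
    ring
  rw [hdiff, abs_of_nonneg (by positivity), sq]
  gcongr <;> linarith

theorem summable_div_nat_succ_sq (c : ℝ) : Summable fun n : ℕ => c / (n + 1 : ℝ) ^ 2 :=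
  ((summable_inv_add_pow one_pos le_rfl).mul_left c).congr fun n => by ring

theorem hasDerivAt_log_Gamma {x : ℝ} (hx : 0 < x) :
    HasDerivAt (fun y => log (Gamma y))
      (-x⁻¹ - eulerMascheroniConstant + ∑' n : ℕ, ((n + 1 : ℝ)⁻¹ - (x + n + 1)⁻¹)) x := by
  have hseries : HasDerivAt
      (fun y => ∑' n : ℕ, (y / (n + 1) - (log (y + n + 1) - log (n + 1))))
      (∑' n : ℕ, ((n + 1 : ℝ)⁻¹ - (x + n + 1)⁻¹)) x := by
    refine hasDerivAt_tsum_of_isPreconnected (summable_div_nat_succ_sq (x + 1)) isOpen_Ioo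
      isPreconnected_Ioo (fun n y hy => ?_)
      (fun n y hy => (norm_eq_abs _).trans_le (abs_inv_sub_inv_add_le hy.1.le hy.2.le n))
      ⟨hx, by linarith⟩ (hasSum_log_Gamma hx).summable ⟨hx, by linarith⟩
    have hy : 0 < y + n + 1 := by have := hy.1; positivity
    have hlog := (((hasDerivAt_id' y).add_const (n : ℝ)).add_const 1).log hy.ne'
    refine (((hasDerivAt_id' y).div_const _).sub (hlog.sub_const _)).congr_deriv ?_
    simp only [one_div]
  have hlog : HasDerivAt (fun y => -log y - eulerMascheroniConstant * y)
      (-x⁻¹ - eulerMascheroniConstant) x := by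
    simpa using (hasDerivAt_log hx.ne').fun_neg.fun_sub ((hasDerivAt_id' x).const_mul _)
  refine (hlog.fun_add hseries).congr_of_eventuallyEq ?_
  filter_upwards [Ioi_mem_nhds hx] with y (hy : 0 < y)
  rw [(hasSum_log_Gamma hy).tsum_eq]
  ring

theorem hasDerivAt_deriv_log_Gamma {x : ℝ} (hx : 0 < x) :
    HasDerivAt (deriv fun y => log (Gamma y)) (∑' n : ℕ, ((x + n) ^ 2)⁻¹) x := by
  have hx2 : x / 2 < x := half_lt_self hx
  have hsum : Summable fun n : ℕ => (n + 1 : ℝ)⁻¹ - (x + n + 1)⁻¹ :=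
    .of_norm_bounded (summable_div_nat_succ_sq x) fun n =>
      (norm_eq_abs _).trans_le (abs_inv_sub_inv_add_le hx.le le_rfl n)
  have hseries : HasDerivAt (fun y : ℝ => ∑' n : ℕ, ((n + 1 : ℝ)⁻¹ - (y + n + 1)⁻¹))
      (∑' n : ℕ, ((x + 1 + n) ^ 2)⁻¹) x := by
    refine hasDerivAt_tsum_of_isPreconnected (g' := fun (n : ℕ) (y : ℝ) => ((y + 1 + n) ^ 2)⁻¹)
      (summable_inv_add_pow (half_pos hx) le_rfl) isOpen_Ioi isPreconnected_Ioi
      (fun n y (hy : x / 2 < y) => ?_) (fun n y (hy : x / 2 < y) => ?_) hx2 hsum hx2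
    · have hy : 0 < y + n + 1 := by have := (half_pos hx).trans hy; positivity
      refine ((((hasDerivAt_id' y).add_const (n : ℝ)).add_const 1).inv hy.ne').const_sub _
        |>.congr_deriv ?_
      ring
    · have : 0 < x / 2 + n := by positivity
      rw [norm_inv, norm_pow, Real.norm_of_nonneg (by linarith)]
      gcongr
      linarith
  have hpsi : HasDerivAt (fun y : ℝ => -y⁻¹ - eulerMascheroniConstant +
      ∑' n : ℕ, ((n + 1 : ℝ)⁻¹ - (y + n + 1)⁻¹)) (∑' n : ℕ, ((x + n) ^ 2)⁻¹) x := by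
    have hshift : ∑' n : ℕ, ((x + n) ^ 2)⁻¹ = (x ^ 2)⁻¹ + ∑' n : ℕ, ((x + 1 + n) ^ 2)⁻¹ :=
      tsum_nat_add_eq_add_tsum (f := fun t : ℝ => (t ^ 2)⁻¹) (summable_inv_add_pow hx le_rfl)
    rw [hshift]
    simpa using ((hasDerivAt_inv hx.ne').fun_neg.sub_const _).fun_add hseries
  refine hpsi.congr_of_eventuallyEq ?_
  filter_upwards [Ioi_mem_nhds hx] with y (hy : 0 < y)
  exact (hasDerivAt_log_Gamma hy).deriv

theorem summable_neg_two_mul_inv_cube {x : ℝ} (hx : 0 < x) :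
    Summable fun n : ℕ => -(2 * ((x + n) ^ 3)⁻¹) :=
  ((summable_inv_add_pow hx (by norm_num)).mul_left 2).neg

theorem trigamma_eq_tsum {x : ℝ} (hx : 0 < x) : trigamma x = ∑' n : ℕ, ((x + n) ^ 2)⁻¹ := by
  rw [trigamma, iteratedDeriv_succ, iteratedDeriv_one]
  exact (hasDerivAt_deriv_log_Gamma hx).deriv

theorem tetragamma_eq_tsum {x : ℝ} (hx : 0 < x) :
    tetragamma x = ∑' n : ℕ, -(2 * ((x + n) ^ 3)⁻¹) := by
  rw [tetragamma, iteratedDeriv_succ]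
  have h := hasDerivAt_tsum_inv_add_pow hx le_rfl
  push_cast at h
  refine (h.congr_of_eventuallyEq ?_).deriv
  filter_upwards [Ioi_mem_nhds hx] with y (hy : 0 < y)
  exact trigamma_eq_tsum hy

/-- Truncations of `ψ'(t) ~ 1/t + 1/(2t²) + ∑ B₂ₖ/t^(2k+1)` after `B₈` and of
`ψ''(t) ~ -1/t² - 1/t³ - ∑ (2k+1) B₂ₖ/t^(2k+2)` after `B₁₀`. -/
noncomputable def trigammaAsymp (t : ℝ) : ℝ :=
  t⁻¹ + t⁻¹ ^ 2 / 2 + t⁻¹ ^ 3 / 6 - t⁻¹ ^ 5 / 30 + t⁻¹ ^ 7 / 42 - t⁻¹ ^ 9 / 30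

noncomputable def tetragammaAsymp (t : ℝ) : ℝ :=
  -t⁻¹ ^ 2 - t⁻¹ ^ 3 - t⁻¹ ^ 4 / 2 + t⁻¹ ^ 6 / 6 - t⁻¹ ^ 8 / 6 + 3 * t⁻¹ ^ 10 / 10
    - 5 * t⁻¹ ^ 12 / 6

theorem tendsto_trigammaAsymp : Tendsto trigammaAsymp atTop (𝓝 0) := by
  unfold trigammaAsymp
  have h : Continuous fun s : ℝ =>
      s + s ^ 2 / 2 + s ^ 3 / 6 - s ^ 5 / 30 + s ^ 7 / 42 - s ^ 9 / 30 := by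
    fun_prop
  simpa [Function.comp_def] using (h.tendsto 0).comp tendsto_inv_atTop_zero

theorem tendsto_tetragammaAsymp : Tendsto tetragammaAsymp atTop (𝓝 0) := by
  unfold tetragammaAsymp
  have h : Continuous fun s : ℝ => -s ^ 2 - s ^ 3 - s ^ 4 / 2 + s ^ 6 / 6 - s ^ 8 / 6
      + 3 * s ^ 10 / 10 - 5 * s ^ 12 / 6 := by
    fun_prop
  simpa [Function.comp_def] using (h.tendsto 0).comp tendsto_inv_atTop_zero

theorem trigammaAsymp_sub_le {t : ℝ} (ht : 0 < t) :
    trigammaAsymp t - trigammaAsymp (t + 1) ≤ (t ^ 2)⁻¹ := by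
  have h : (t ^ 2)⁻¹ - (trigammaAsymp t - trigammaAsymp (t + 1)) =
      (175*t^6 + 525*t^5 + 709*t^4 + 543*t^3 + 247*t^2 + 63*t + 7) / (210 * t^9 * (t + 1)^9) := by
    unfold trigammaAsymp
    field_simp
    ring
  rw [← sub_nonneg, h]
  positivity

theorem tetragammaAsymp_sub_le {t : ℝ} (ht : 0 < t) :
    tetragammaAsymp t - tetragammaAsymp (t + 1) ≤ -(2 * (t ^ 3)⁻¹) := by
  have h : -(2 * (t ^ 3)⁻¹) - (tetragammaAsymp t - tetragammaAsymp (t + 1)) =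
      (1382*t^9 + 6219*t^8 + 13712*t^7 + 18970*t^6 + 17880*t^5 + 11786*t^4 + 5392*t^3
        + 1641*t^2 + 300*t + 25) / (30 * t^12 * (t + 1)^12) := by
    unfold tetragammaAsymp
    field_simp
    ring
  rw [← sub_nonneg, h]
  positivity

theorem trigammaAsymp_nonneg {t : ℝ} (ht : 1 ≤ t) : 0 ≤ trigammaAsymp t := by
  have hs : 0 < t⁻¹ := by positivity
  have hs1 : t⁻¹ ≤ 1 := inv_le_one_of_one_le₀ ht
  have h4 : t⁻¹ ^ 4 ≤ 1 := pow_le_one₀ hs.le hs1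
  have h7 : t⁻¹ ^ 7 ≤ 1 := pow_le_one₀ hs.le hs1
  unfold trigammaAsymp
  nlinarith [mul_le_mul_of_nonneg_left h4 hs.le,
    mul_le_mul_of_nonneg_left h7 (pow_nonneg hs.le 2), pow_pos hs 3, pow_pos hs 7]

theorem trigamma_eq_inv_sq_add {x : ℝ} (hx : 0 < x) :
    trigamma x = (x ^ 2)⁻¹ + trigamma (x + 1) := by
  rw [trigamma_eq_tsum hx, trigamma_eq_tsum (by positivity)]
  exact tsum_nat_add_eq_add_tsum (f := fun t : ℝ => (t ^ 2)⁻¹) (summable_inv_add_pow hx le_rfl)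

theorem tetragamma_eq_add {x : ℝ} (hx : 0 < x) :
    tetragamma x = -(2 * (x ^ 3)⁻¹) + tetragamma (x + 1) := by
  rw [tetragamma_eq_tsum hx, tetragamma_eq_tsum (by positivity)]
  exact tsum_nat_add_eq_add_tsum (f := fun t : ℝ => -(2 * (t ^ 3)⁻¹))
    (summable_neg_two_mul_inv_cube hx)

theorem trigammaAsymp_le_trigamma {x : ℝ} (hx : 0 < x) : trigammaAsymp x ≤ trigamma x := by
  rw [trigamma_eq_tsum hx]
  exact le_tsum_of_sub_le (f := fun t : ℝ => (t ^ 2)⁻¹) tendsto_trigammaAsymp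
    (summable_inv_add_pow hx le_rfl) fun t ht => trigammaAsymp_sub_le (hx.trans_le ht)

theorem tetragammaAsymp_le_tetragamma {x : ℝ} (hx : 0 < x) :
    tetragammaAsymp x ≤ tetragamma x := by
  rw [tetragamma_eq_tsum hx]
  exact le_tsum_of_sub_le (f := fun t : ℝ => -(2 * (t ^ 3)⁻¹)) tendsto_tetragammaAsymp
    (summable_neg_two_mul_inv_cube hx) fun t ht => tetragammaAsymp_sub_le (hx.trans_le ht)

theorem sq_add_sub_p_div_eq {x : ℝ} (hx : 0 < x) :
    ((x ^ 2)⁻¹ + trigammaAsymp (x + 1)) ^ 2 + (-(2 * (x ^ 3)⁻¹) + tetragammaAsymp (x + 1))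
      - p x / (900 * x^4 * (x + 1)^10)
      = (7350*x^16 + 132300*x^15 + 1119300*x^14 + 5889450*x^13 + 21504140*x^12 + 57595510*x^11
        + 116707710*x^10 + 182135170*x^9 + 221092463*x^8 + 209581542*x^7 + 154821628*x^6
        + 88284212*x^5 + 38109222*x^4 + 12035940*x^3 + 2623110*x^2 + 352800*x + 22050)
        / (44100 * x^4 * (x + 1)^18) := by
  unfold trigammaAsymp tetragammaAsymp p
  field_simp
  ring

theorem stmt0 : ∀ x : ℝ, 0 < x →
    (trigamma x)^2 + tetragamma x > p x / (900 * x^4 * (x+1)^10) := by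
  intro x hx
  have hA : 0 ≤ (x ^ 2)⁻¹ + trigammaAsymp (x + 1) := by
    have := trigammaAsymp_nonneg (le_add_of_nonneg_left hx.le)
    positivity
  calc p x / (900 * x^4 * (x+1)^10)
      < ((x ^ 2)⁻¹ + trigammaAsymp (x + 1)) ^ 2
          + (-(2 * (x ^ 3)⁻¹) + tetragammaAsymp (x + 1)) := by
        rw [← sub_pos, sq_add_sub_p_div_eq hx]
        positivity
    _ ≤ (trigamma x)^2 + tetragamma x := by
        have hx1 : 0 < x + 1 := by positivity
        rw [trigamma_eq_inv_sq_add hx, tetragamma_eq_add hx]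
        gcongr
        · exact trigammaAsymp_le_trigamma hx1
        · exact tetragammaAsymp_le_tetragamma hx1
end

section
/- For all x > 0, ψ'(x) > Q(x)/(1800 x² (1+x)¹⁰ (2+x)¹⁰), where Q(x) is the degree-21 polynomial 1382400 + 21657600x + 162792960x² + 778137600x³ + 2645782983x⁴ + 6789381590x⁵ + 13626443025x⁶ + 21889330810x⁷ + 28579049475x⁸ + 30634381522x⁹ + 27125436630x¹⁰ + 19896883200x¹¹ + 12088287630x¹² + 6063596590x¹³ + 2494770300x¹⁴ + 832958400x¹⁵ + 222060150x¹⁶ + 46134540x¹⁷ + 7195500x¹⁸ + 792300x¹⁹ + 54900x²⁰ + 1800x²¹. -/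
noncomputable def Q (x : ℝ) : ℝ :=
  1382400 + 21657600*x + 162792960*x^2 + 778137600*x^3 + 2645782983*x^4
    + 6789381590*x^5 + 13626443025*x^6 + 21889330810*x^7 + 28579049475*x^8
    + 30634381522*x^9 + 27125436630*x^10 + 19896883200*x^11 + 12088287630*x^12
    + 6063596590*x^13 + 2494770300*x^14 + 832958400*x^15 + 222060150*x^16
    + 46134540*x^17 + 7195500*x^18 + 792300*x^19 + 54900*x^20 + 1800*x^21

/-!
Iterating `ψ'(x + 1) = ψ'(x) - 1/x²` three times gives
`ψ'(x) = 1/x² + 1/(x+1)² + 1/(x+2)² + ψ'(x+3)`. For the tail we use the asymptotic series of `ψ'`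
truncated after the `B₄` term, `A(x) = 1/x + 1/(2x²) + 1/(6x³) - 1/(30x⁵)`: it satisfies
`A(x) - A(x+1) ≤ 1/x²`, while `ψ' ≥ 0` by log-convexity of `Γ`, so telescoping and `A(x+n) → 0`
give `A ≤ ψ'`. What remains, `1/x² + 1/(x+1)² + 1/(x+2)² + A(x+3)` minus the claimed bound, is a
rational function whose numerator and denominator have positive coefficients.
-/

open Real Set Filter Topology

theorem le_of_sub_le_sub_add_one {f g : ℝ → ℝ} {x : ℝ} (hf : ∀ y, x ≤ y → 0 ≤ f y)
    (hstep : ∀ y, x ≤ y → g y - g (y + 1) ≤ f y - f (y + 1))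
    (hg : Tendsto g atTop (𝓝 0)) : g x ≤ f x := by
  have htele (n : ℕ) : g x - g (x + n) ≤ f x - f (x + n) := by
    induction n with
    | zero => simp
    | succ n ih =>
      have := hstep (x + n) (by simp)
      push_cast
      rw [← add_assoc]
      linarith
  have hlim : Tendsto (fun n : ℕ => g x - g (x + n)) atTop (𝓝 (g x)) := by
    simpa using tendsto_const_nhds.sub
      (hg.comp (tendsto_atTop_add_const_left _ x tendsto_natCast_atTop_atTop))
  exact le_of_tendsto' hlim fun n => (htele n).trans (by linarith [hf (x + n) (by simp)])

namespace Real

theorem contDiffAt_Gamma {n : WithTop ℕ∞} {x : ℝ} (hx : 0 < x) : ContDiffAt ℝ n Gamma x := by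
  have hre : IsOpen {s : ℂ | 0 < s.re} := isOpen_lt continuous_const Complex.continuous_re
  have hdiff : DifferentiableOn ℂ Complex.Gamma {s : ℂ | 0 < s.re} := fun s hs =>
    (Complex.differentiableAt_Gamma s fun m hsm => by
      simp only [Set.mem_ofPred_eq, hsm, Complex.neg_re, Complex.natCast_re] at hs
      linarith [(m.cast_nonneg : (0 : ℝ) ≤ m)]).differentiableWithinAt
  have hC : ContDiffAt ℂ n Complex.Gamma x :=
    (hdiff.contDiffOn hre).contDiffAt (hre.mem_nhds (by simpa using hx))
  simpa only [Complex.Gamma_ofReal, Complex.ofReal_re] using hC.real_of_complex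

theorem contDiffAt_log_Gamma {n : WithTop ℕ∞} {x : ℝ} (hx : 0 < x) :
    ContDiffAt ℝ n (fun y => log (Gamma y)) x :=
  (contDiffAt_Gamma hx).log (Gamma_pos_of_pos hx).ne'

theorem deriv_log_Gamma_add_one {x : ℝ} (hx : 0 < x) :
    deriv (fun y => log (Gamma y)) (x + 1) = deriv (fun y => log (Gamma y)) x + x⁻¹ := by
  have hrec : (fun y => log (Gamma (y + 1))) =ᶠ[𝓝 x] fun y => log (Gamma y) + log y := by
    filter_upwards [eventually_gt_nhds hx] with y hy
    rw [Gamma_add_one hy.ne', log_mul hy.ne' (Gamma_pos_of_pos hy).ne', add_comm]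
  rw [← deriv_comp_add_const, hrec.deriv_eq, deriv_fun_add
    ((contDiffAt_log_Gamma (n := 1) hx).differentiableAt one_ne_zero)
    (differentiableAt_log hx.ne'), deriv_log]

end Real

theorem trigamma_eq_deriv_deriv (x : ℝ) :
    trigamma x = deriv (deriv fun y => log (Gamma y)) x := by
  rw [trigamma, iteratedDeriv_succ, iteratedDeriv_one]

theorem trigamma_add_one {x : ℝ} (hx : 0 < x) : trigamma (x + 1) = trigamma x - 1 / x ^ 2 := by
  have hrec : (fun y => deriv (fun y => log (Gamma y)) (y + 1)) =ᶠ[𝓝 x]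
      fun y => deriv (fun y => log (Gamma y)) y + y⁻¹ := by
    filter_upwards [eventually_gt_nhds hx] with y hy
    exact deriv_log_Gamma_add_one hy
  have hdiff : DifferentiableAt ℝ (deriv fun y => log (Gamma y)) x :=
    ((contDiffAt_log_Gamma (n := 2) hx).derivWithin (m := 1) (by norm_num)).differentiableAt
      one_ne_zero
  rw [trigamma_eq_deriv_deriv, trigamma_eq_deriv_deriv, ← deriv_comp_add_const, hrec.deriv_eq,
    deriv_fun_add hdiff (differentiableAt_inv hx.ne'), deriv_inv]
  ring

theorem trigamma_nonneg {x : ℝ} (hx : 0 < x) : 0 ≤ trigamma x := by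
  have hmono : MonotoneOn (deriv fun y => log (Gamma y)) (Ioi 0) :=
    convexOn_log_Gamma.monotoneOn_deriv fun y hy =>
      (contDiffAt_log_Gamma (n := 1) hy).differentiableAt one_ne_zero
  rw [trigamma_eq_deriv_deriv, ← derivWithin_of_isOpen isOpen_Ioi hx]
  exact hmono.derivWithin_nonneg

noncomputable def trigammaAsymptotic (x : ℝ) : ℝ :=
  x⁻¹ + x⁻¹ ^ 2 / 2 + x⁻¹ ^ 3 / 6 - x⁻¹ ^ 5 / 30

theorem trigammaAsymptotic_sub_add_one_le {x : ℝ} (hx : 0 < x) :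
    trigammaAsymptotic x - trigammaAsymptotic (x + 1) ≤ 1 / x ^ 2 := by
  have hdefect : 1 / x ^ 2 - (trigammaAsymptotic x - trigammaAsymptotic (x + 1)) =
      (5 * x ^ 2 + 5 * x + 1) / (30 * x ^ 5 * (x + 1) ^ 5) := by
    unfold trigammaAsymptotic
    field_simp
    ring
  have : 0 < (5 * x ^ 2 + 5 * x + 1) / (30 * x ^ 5 * (x + 1) ^ 5) := by positivity
  linarith

theorem tendsto_trigammaAsymptotic_atTop : Tendsto trigammaAsymptotic atTop (𝓝 0) := by
  have h : Tendsto (fun x : ℝ => x⁻¹) atTop (𝓝 0) := tendsto_inv_atTop_zero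
  unfold trigammaAsymptotic
  simpa using ((h.add ((h.pow 2).div_const 2)).add ((h.pow 3).div_const 6)).sub
    ((h.pow 5).div_const 30)

theorem trigammaAsymptotic_le_trigamma {x : ℝ} (hx : 0 < x) :
    trigammaAsymptotic x ≤ trigamma x := by
  refine le_of_sub_le_sub_add_one (fun y hy => trigamma_nonneg (hx.trans_le hy))
    (fun y hy => ?_) tendsto_trigammaAsymptotic_atTop
  have hy₀ : 0 < y := hx.trans_le hy
  rw [trigamma_add_one hy₀, sub_sub_cancel]
  exact trigammaAsymptotic_sub_add_one_le hy₀

theorem trigamma_eq_add_trigamma_add_three {x : ℝ} (hx : 0 < x) :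
    trigamma x = 1 / x ^ 2 + 1 / (x + 1) ^ 2 + 1 / (x + 2) ^ 2 + trigamma (x + 3) := by
  have h₁ := trigamma_add_one hx
  have h₂ := trigamma_add_one (x := x + 1) (by positivity)
  have h₃ := trigamma_add_one (x := x + 2) (by positivity)
  rw [add_assoc x 1 1, one_add_one_eq_two] at h₂
  rw [add_assoc x 2 1, two_add_one_eq_three] at h₃
  linarith

theorem Q_div_lt {x : ℝ} (hx : 0 < x) :
    Q x / (1800 * x ^ 2 * (1 + x) ^ 10 * (2 + x) ^ 10) <
      1 / x ^ 2 + 1 / (x + 1) ^ 2 + 1 / (x + 2) ^ 2 + trigammaAsymptotic (x + 3) := by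
  have hgap : 1 / x ^ 2 + 1 / (x + 1) ^ 2 + 1 / (x + 2) ^ 2 + trigammaAsymptotic (x + 3)
        - Q x / (1800 * x ^ 2 * (1 + x) ^ 10 * (2 + x) ^ 10)
      = (111974400 + 1642291200*x + 11317716480*x^2 + 48789619200*x^3
        + 147751547931*x^4 + 334561928715*x^5 + 588564121965*x^6
        + 824952415395*x^7 + 937188570930*x^8 + 873097017396*x^9
        + 672145279585*x^10 + 429496369185*x^11 + 228173519315*x^12
        + 100678035975*x^13 + 36754555778*x^14 + 11024331270*x^15
        + 2687117400*x^16 + 523596090*x^17 + 79596410*x^18 + 9093600*x^19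
        + 734250*x^20 + 37350*x^21 + 900*x^22)
        / (1800 * x ^ 2 * (1 + x) ^ 10 * (2 + x) ^ 10 * (x + 3) ^ 5) := by
    unfold trigammaAsymptotic Q
    field_simp
    ring
  rw [← sub_pos, hgap]
  positivity

theorem stmt3 : ∀ x : ℝ, 0 < x →
    trigamma x > Q x / (1800 * x^2 * (1+x)^10 * (2+x)^10) := by
  intro x hx
  calc Q x / (1800 * x ^ 2 * (1 + x) ^ 10 * (2 + x) ^ 10)
      < 1 / x ^ 2 + 1 / (x + 1) ^ 2 + 1 / (x + 2) ^ 2 + trigammaAsymptotic (x + 3) := Q_div_lt hx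
    _ ≤ 1 / x ^ 2 + 1 / (x + 1) ^ 2 + 1 / (x + 2) ^ 2 + trigamma (x + 3) := by
      gcongr
      exact trigammaAsymptotic_le_trigamma (by positivity)
    _ = trigamma x := (trigamma_eq_add_trigamma_add_three hx).symm
end

section
/- Suppose f : (0,∞) → ℝ is infinitely differentiable, the function x ↦ f(x) − f(x+1) is completely monotonic on (0,∞), and for every n ≥ 0, f⁽ⁿ⁾(x+m) → 0 as m → ∞ (m through positive integers, for each fixed x > 0). Then f is completely monotonic on (0,∞). -/
lemma iteratedDerivWithin_of_isOpen' {f : ℝ → ℝ} {s : Set ℝ} {x : ℝ} (n : ℕ)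
    (hs : IsOpen s) (hx : x ∈ s) :
    iteratedDerivWithin n f s x = iteratedDeriv n f x := by
  simp only [iteratedDerivWithin, iteratedDeriv,
    iteratedFDerivWithin_of_isOpen n hs hx]

theorem stmt7 (f : ℝ → ℝ)
    (hsmooth : ContDiffOn ℝ (⊤ : ℕ∞) f (Set.Ioi 0))
    (hcm : ∀ n : ℕ, ∀ x : ℝ, 0 < x →
      0 ≤ (-1 : ℝ)^n * iteratedDeriv n (fun y => f y - f (y+1)) x)
    (hlim : ∀ n : ℕ, ∀ x : ℝ, 0 < x →
      Filter.Tendsto (fun m : ℕ => iteratedDeriv n f (x + m)) Filter.atTop (nhds 0)) :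
    ∀ n : ℕ, ∀ x : ℝ, 0 < x → 0 ≤ (-1 : ℝ)^n * iteratedDeriv n f x := by
  intro n x hx
  have hso : IsOpen (Set.Ioi (0:ℝ)) := isOpen_Ioi
  have hu : UniqueDiffOn ℝ (Set.Ioi (0:ℝ)) := hso.uniqueDiffOn
  have hshift : ContDiffOn ℝ (⊤ : ℕ∞) (fun y => f (y+1)) (Set.Ioi 0) := by
    apply hsmooth.comp (ContDiff.contDiffOn (by fun_prop))
    intro y hy
    simp only [Set.mem_Ioi] at *
    linarith
  -- key: iterated deriv of the difference splits, for y > 0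
  have key : ∀ y : ℝ, 0 < y →
      iteratedDeriv n (fun z => f z - f (z+1)) y
        = iteratedDeriv n f y - iteratedDeriv n f (y+1) := by
    intro y hy
    have hy' : y ∈ Set.Ioi (0:ℝ) := hy
    have h1 : iteratedDeriv n (fun z => f z - f (z+1)) y
        = iteratedDerivWithin n (f - fun z => f (z+1)) (Set.Ioi 0) y := by
      rw [iteratedDerivWithin_of_isOpen' n hso hy']
      rfl
    rw [h1, iteratedDerivWithin_sub hy' hu (hsmooth.of_le (by exact_mod_cast le_top) y hy')
      (hshift.of_le (by exact_mod_cast le_top) y hy'),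
      iteratedDerivWithin_of_isOpen' n hso hy',
      iteratedDerivWithin_of_isOpen' n hso hy']
    have := iteratedDeriv_comp_add_const n f 1
    rw [congrFun this y]
  -- monotone telescoping: (-1)^n f^(n)(x) ≥ (-1)^n f^(n)(x+m)
  have step : ∀ m : ℕ,
      (-1:ℝ)^n * iteratedDeriv n f (x + m) ≥ (-1:ℝ)^n * iteratedDeriv n f (x + (m+1)) := by
    intro m
    have hxm : (0:ℝ) < x + m := by positivity
    have := hcm n (x + m) hxm
    rw [key (x + m) hxm] at this
    have : (-1:ℝ)^n * iteratedDeriv n f (x + m + 1)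
        ≤ (-1:ℝ)^n * iteratedDeriv n f (x + m) := by nlinarith [this]
    calc (-1:ℝ)^n * iteratedDeriv n f (x + (m+1))
        = (-1:ℝ)^n * iteratedDeriv n f (x + m + 1) := by ring_nf
      _ ≤ (-1:ℝ)^n * iteratedDeriv n f (x + m) := this
  have mono : ∀ m : ℕ,
      (-1:ℝ)^n * iteratedDeriv n f (x + m) ≤ (-1:ℝ)^n * iteratedDeriv n f x := by
    intro m
    induction m with
    | zero => simp
    | succ k ih =>
      have := step k
      push_cast at this ⊢
      linarith
  have hlim' : Filter.Tendsto (fun m : ℕ => (-1:ℝ)^n * iteratedDeriv n f (x + m))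
      Filter.atTop (nhds 0) := by
    have := (hlim n x hx).const_mul ((-1:ℝ)^n)
    simpa using this
  exact le_of_tendsto hlim' (Filter.Eventually.of_forall mono)
end
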